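/- Every Hirzebruch–Jung continued fraction string for p²/(pq+1) with p > q ≥ 1 coprime (all entries ≥ 2) is obtainable from the string [2,2,2] by finitely many applications of the operations [c₁,...,c_k] ↦ [c₁+1, c₂,...,c_k, 2] and [c₁,...,c_k] ↦ [2, c₁,...,c_{k−1}, c_k+1]; conversely every string so obtained is the expansion of p²/(pq+1) for some coprime p > q ≥ 1. -/

import Mathlib

/-- Hirzebruch–Jung continued fraction `[a₁,…,a_k] = a₁ - 1/(a₂ - 1/(⋯ - 1/a_k))`.
Note `1/0 = 0` in `ℚ`, so `hj [a] = a`. -/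
def hj : List ℚ → ℚ
  | [] => 0
  | a :: l => a - 1 / hj l

/-- HJ continued fraction of a list of naturals. -/
def hjN (l : List ℕ) : ℚ := hj (l.map (fun x => (x : ℚ)))

/-- Strings obtainable from [2,2,2] via
[c₁,…,c_k] ↦ [c₁+1, c₂, …, c_k, 2] and [c₁,…,c_k] ↦ [2, c₁, …, c_{k−1}, c_k+1]. -/
inductive Gen2 : List ℕ → Prop
  | base : Gen2 [2, 2, 2]
  | left {c : ℕ} {l : List ℕ} : Gen2 (c :: l) → Gen2 ((c + 1) :: (l ++ [2]))
  | right {l : List ℕ} {c : ℕ} : Gen2 (l ++ [c]) → Gen2 (2 :: (l ++ [c + 1]))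

/-!
A string `[c₁, …, c_k]` is encoded by the integer matrix `∏ᵢ [[cᵢ, -1], [1, 0]]`, whose first column
is the numerator and denominator of its continued fraction. Both operations multiply this matrix by
fixed unimodular matrices, and they send the matrix attached to `(p, q)` to the one attached to
`(p + q, q)`, respectively `(2p - q, p)`. Read backwards, this is a Euclid-type descent
`(p, q) ↦ (p - q, q)` or `(q, 2q - p)` ending at `(2, 1)`, the pair of `[2, 2, 2]`. For the converse,
a continued fraction with entries `≥ 2` determines its string: the first entry is its ceiling.
-/

lemma hjN_cons (c : ℕ) (t : List ℕ) : hjN (c :: t) = c - 1 / hjN t := rfl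

section Uniqueness

variable {l : List ℕ}

lemma inv_hjN_mem_Ico (h : ∀ x ∈ l, 2 ≤ x) : (hjN l)⁻¹ ∈ Set.Ico (0 : ℚ) 1 := by
  induction l with
  | nil => simp [hjN, hj]
  | cons c t ih =>
    have hc : (2 : ℚ) ≤ c := by exact_mod_cast h c List.mem_cons_self
    obtain ⟨h0, h1⟩ := ih fun x hx => h x (List.mem_cons_of_mem _ hx)
    have : 1 < hjN (c :: t) := by rw [hjN_cons, one_div]; linarith
    exact ⟨by positivity, inv_lt_one_of_one_lt₀ this⟩

lemma ceil_hjN_cons {c : ℕ} {t : List ℕ} (h : ∀ x ∈ t, 2 ≤ x) : ⌈hjN (c :: t)⌉ = c := by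
  obtain ⟨h0, h1⟩ := inv_hjN_mem_Ico h
  rw [Int.ceil_eq_iff, hjN_cons, one_div]
  push_cast
  constructor <;> linarith

lemma hjN_cons_ne_zero {c : ℕ} {t : List ℕ} (h : ∀ x ∈ c :: t, 2 ≤ x) : hjN (c :: t) ≠ 0 := by
  intro h0
  have hceil := ceil_hjN_cons (c := c) fun x hx => h x (List.mem_cons_of_mem _ hx)
  rw [h0, Int.ceil_zero] at hceil
  have := h c List.mem_cons_self
  omega

lemma eq_of_hjN_eq {l' : List ℕ} (h : ∀ x ∈ l, 2 ≤ x) (h' : ∀ x ∈ l', 2 ≤ x)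
    (he : hjN l = hjN l') : l = l' := by
  induction l generalizing l' with
  | nil =>
    cases l' with
    | nil => rfl
    | cons c' t' => exact absurd he.symm (hjN_cons_ne_zero h')
  | cons c t ih =>
    cases l' with
    | nil => exact absurd he (hjN_cons_ne_zero h)
    | cons c' t' =>
      have ht : ∀ x ∈ t, 2 ≤ x := fun x hx => h x (List.mem_cons_of_mem _ hx)
      have ht' : ∀ x ∈ t', 2 ≤ x := fun x hx => h' x (List.mem_cons_of_mem _ hx)
      have hc : c = c' := by
        have := ceil_hjN_cons (c := c) ht
        rw [he, ceil_hjN_cons ht'] at this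
        exact_mod_cast this.symm
      subst hc
      rw [hjN_cons, hjN_cons, sub_right_inj, one_div, one_div, inv_inj] at he
      rw [ih ht ht' he]

end Uniqueness

def hjMatrix (c : ℤ) : Matrix (Fin 2) (Fin 2) ℤ := !![c, -1; 1, 0]

def stringMatrix (l : List ℕ) : Matrix (Fin 2) (Fin 2) ℤ := (l.map fun c => hjMatrix c).prod

lemma stringMatrix_cons (c : ℕ) (t : List ℕ) :
    stringMatrix (c :: t) = hjMatrix c * stringMatrix t := by
  simp [stringMatrix]

lemma stringMatrix_append_singleton (t : List ℕ) (c : ℕ) :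
    stringMatrix (t ++ [c]) = stringMatrix t * hjMatrix c := by
  simp [stringMatrix]

lemma hjMatrix_add_one_eq_mul_left (c : ℤ) : hjMatrix (c + 1) = !![1, 1; 0, 1] * hjMatrix c := by
  ext i j; fin_cases i <;> fin_cases j <;> simp [hjMatrix]

lemma hjMatrix_add_one_eq_mul_right (c : ℤ) : hjMatrix (c + 1) = hjMatrix c * !![1, 0; -1, 1] := by
  ext i j; fin_cases i <;> fin_cases j <;> simp [hjMatrix]

lemma stringMatrix_cons_apply_zero_zero (c : ℕ) (t : List ℕ) :
    stringMatrix (c :: t) 0 0 = c * stringMatrix t 0 0 - stringMatrix t 1 0 := by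
  simp [stringMatrix_cons, hjMatrix, Matrix.mul_apply, Fin.sum_univ_two]; ring

lemma stringMatrix_cons_apply_one_zero (c : ℕ) (t : List ℕ) :
    stringMatrix (c :: t) 1 0 = stringMatrix t 0 0 := by
  simp [stringMatrix_cons, hjMatrix, Matrix.mul_apply, Fin.sum_univ_two]

lemma stringMatrix_col_bounds {l : List ℕ} (h : ∀ x ∈ l, 2 ≤ x) :
    0 ≤ stringMatrix l 1 0 ∧ stringMatrix l 1 0 < stringMatrix l 0 0 := by
  induction l with
  | nil => simp [stringMatrix]
  | cons c t ih =>
    have hc : (2 : ℤ) ≤ c := by exact_mod_cast h c List.mem_cons_self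
    obtain ⟨h0, h1⟩ := ih fun x hx => h x (List.mem_cons_of_mem _ hx)
    rw [stringMatrix_cons_apply_zero_zero, stringMatrix_cons_apply_one_zero]
    constructor <;> nlinarith

lemma hjN_eq_div {l : List ℕ} (h : ∀ x ∈ l, 2 ≤ x) :
    hjN l = (stringMatrix l 0 0 : ℚ) / stringMatrix l 1 0 := by
  induction l with
  | nil => simp [hjN, hj, stringMatrix]
  | cons c t ih =>
    have ht : ∀ x ∈ t, 2 ≤ x := fun x hx => h x (List.mem_cons_of_mem _ hx)
    have hP : (stringMatrix t 0 0 : ℚ) ≠ 0 := by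
      have := stringMatrix_col_bounds ht
      exact_mod_cast (by omega : stringMatrix t 0 0 ≠ 0)
    rw [hjN_cons, ih ht, stringMatrix_cons_apply_zero_zero, stringMatrix_cons_apply_one_zero,
      one_div_div]
    push_cast
    field_simp

-- The matrix of the string of `p² / (pq + 1)`; its second column is minus the numerator and
-- denominator of that string with its last entry removed.
def pqMatrix (p q : ℤ) : Matrix (Fin 2) (Fin 2) ℤ :=
  !![p ^ 2, -(p * (p - q) + 1); p * q + 1, -(q * (p - q) + 1)]

lemma stringMatrix_two_two_two : stringMatrix [2, 2, 2] = pqMatrix 2 1 := by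
  ext i j; fin_cases i <;> fin_cases j <;> decide

lemma pqMatrix_left (p q : ℤ) :
    !![1, 1; 0, 1] * pqMatrix p q * hjMatrix 2 = pqMatrix (p + q) q := by
  simp only [pqMatrix, hjMatrix, Matrix.mul_fin_two]
  ext i j
  fin_cases i <;> fin_cases j <;>
    simp only [Matrix.of_apply, Matrix.cons_val', Matrix.cons_val_zero, Matrix.cons_val_one,
      Matrix.cons_val_fin_one, Fin.isValue, Fin.zero_eta, Fin.mk_one] <;> ring

lemma pqMatrix_right (p q : ℤ) :
    hjMatrix 2 * pqMatrix p q * !![1, 0; -1, 1] = pqMatrix (2 * p - q) p := by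
  simp only [pqMatrix, hjMatrix, Matrix.mul_fin_two]
  ext i j
  fin_cases i <;> fin_cases j <;>
    simp only [Matrix.of_apply, Matrix.cons_val', Matrix.cons_val_zero, Matrix.cons_val_one,
      Matrix.cons_val_fin_one, Fin.isValue, Fin.zero_eta, Fin.mk_one] <;> ring

lemma stringMatrix_left (c : ℕ) (t : List ℕ) :
    stringMatrix ((c + 1) :: (t ++ [2])) = !![1, 1; 0, 1] * stringMatrix (c :: t) * hjMatrix 2 := by
  rw [stringMatrix_cons, stringMatrix_append_singleton, stringMatrix_cons, Nat.cast_succ c,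
    hjMatrix_add_one_eq_mul_left]
  simp only [Matrix.mul_assoc]; rfl

lemma stringMatrix_right (t : List ℕ) (c : ℕ) :
    stringMatrix (2 :: (t ++ [c + 1])) = hjMatrix 2 * stringMatrix (t ++ [c]) * !![1, 0; -1, 1] := by
  rw [stringMatrix_cons, stringMatrix_append_singleton, stringMatrix_append_singleton,
    Nat.cast_succ c, hjMatrix_add_one_eq_mul_right]
  simp only [Matrix.mul_assoc]; rfl

namespace Gen2

variable {l : List ℕ}

lemma two_le (h : Gen2 l) : ∀ x ∈ l, 2 ≤ x := by
  induction h with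
  | base => decide
  | left _ ih | right _ ih =>
    simp only [List.forall_mem_cons, List.forall_mem_append] at ih ⊢
    grind

lemma ne_nil (h : Gen2 l) : l ≠ [] := by
  cases h <;> simp

lemma exists_stringMatrix_eq (h : Gen2 l) :
    ∃ p q : ℕ, 1 ≤ q ∧ q < p ∧ Nat.Coprime p q ∧ stringMatrix l = pqMatrix p q := by
  induction h with
  | base => exact ⟨2, 1, le_rfl, one_lt_two, by decide, stringMatrix_two_two_two⟩
  | @left c t _ ih =>
    obtain ⟨p, q, hq, hqp, hpq, hM⟩ := ih
    refine ⟨p + q, q, hq, by omega, Nat.coprime_add_self_left.mpr hpq, ?_⟩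
    rw [stringMatrix_left, hM, pqMatrix_left]
    push_cast; rfl
  | @right t c _ ih =>
    obtain ⟨p, q, hq, hqp, hpq, hM⟩ := ih
    have hcop : Nat.Coprime (p + (p - q)) p := by
      rw [Nat.coprime_self_add_left, Nat.coprime_self_sub_left hqp.le]
      exact hpq.symm
    refine ⟨p + (p - q), p, by omega, by omega, hcop, ?_⟩
    rw [stringMatrix_right, hM, pqMatrix_right]
    congr 1
    omega

end Gen2

lemma exists_gen2_stringMatrix_eq {p q : ℕ} (hq : 1 ≤ q) (hqp : q < p) (hpq : Nat.Coprime p q) :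
    ∃ l, Gen2 l ∧ stringMatrix l = pqMatrix p q := by
  induction p using Nat.strong_induction_on generalizing q with
  | _ p ih =>
  rcases lt_trichotomy p (2 * q) with hlt | heq | hgt
  · have hcop : Nat.Coprime q (q - (p - q)) := by
      rw [Nat.coprime_self_sub_right (by omega), Nat.coprime_sub_self_right hqp.le]
      exact hpq.symm
    obtain ⟨l, hl, hM⟩ := ih q hqp (by omega) (by omega) hcop
    obtain ⟨t, c, rfl⟩ := (List.eq_nil_or_concat' l).resolve_left hl.ne_nil
    refine ⟨_, hl.right, ?_⟩
    rw [stringMatrix_right, hM, pqMatrix_right]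
    congr 1
    omega
  · obtain rfl : q = 1 := Nat.Coprime.eq_one_of_dvd hpq.symm ⟨2, by omega⟩
    obtain rfl : p = 2 := by omega
    exact ⟨_, Gen2.base, stringMatrix_two_two_two⟩
  · have hcop : Nat.Coprime (p - q) q := by
      rwa [Nat.coprime_sub_self_left hqp.le]
    obtain ⟨l, hl, hM⟩ := ih (p - q) (by omega) hq (by omega) hcop
    obtain ⟨c, t, rfl⟩ := List.exists_cons_of_ne_nil hl.ne_nil
    refine ⟨_, hl.left, ?_⟩
    rw [stringMatrix_left, hM, pqMatrix_left]
    congr 1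
    omega

lemma hjN_of_stringMatrix_eq {l : List ℕ} (h : ∀ x ∈ l, 2 ≤ x) {p q : ℕ}
    (hM : stringMatrix l = pqMatrix p q) :
    hjN l = ((p ^ 2 : ℕ) : ℚ) / ((p * q + 1 : ℕ) : ℚ) := by
  rw [hjN_eq_div h, hM]
  simp [pqMatrix]

theorem stmt18 (l : List ℕ) :
    Gen2 l ↔
      ((∀ x ∈ l, 2 ≤ x) ∧
        ∃ p q : ℕ, 1 ≤ q ∧ q < p ∧ Nat.Coprime p q ∧
          hjN l = ((p ^ 2 : ℕ) : ℚ) / ((p * q + 1 : ℕ) : ℚ)) := by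
  constructor
  · intro hl
    obtain ⟨p, q, hq, hqp, hpq, hM⟩ := hl.exists_stringMatrix_eq
    exact ⟨hl.two_le, p, q, hq, hqp, hpq, hjN_of_stringMatrix_eq hl.two_le hM⟩
  · rintro ⟨h, p, q, hq, hqp, hpq, hval⟩
    obtain ⟨l', hl', hM⟩ := exists_gen2_stringMatrix_eq hq hqp hpq
    rwa [eq_of_hjN_eq h hl'.two_le (hval.trans (hjN_of_stringMatrix_eq hl'.two_le hM).symm)]
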